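/- arXiv:1601.02813 — 4 statements merged into one kernel-verified Lean document; each statement's English description precedes it below -/
import Mathlib

section
/- Let P ∈ ℤ[X₁,…,X_k] have absolute degree r and let V = {z ∈ ℝ^k : P(z) = 0}. Let T = V ∩ ℚ^k. Let ψ : ℝ → ℝ satisfy ψ(t) = o(t^(−r+1)) as t → ∞. If ζ ∈ V and for arbitrarily large integers x there exist integers y₁,…,y_k with max_j |x ζ_j − y_j| ≤ ψ(x), then ζ lies in the topological closure of T. -/
/-!
Write the approximations as `z = y / x`. Since `P` has integer coefficients and total degree at
most `r`, the number `x ^ r * P(z)` is an integer. As `P(ζ) = 0` and polynomial evaluation is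
locally Lipschitz, this integer is `O(x ^ (r - 1) * ψ(x)) = o(1)`, so it vanishes for large `x`:
then `z ∈ T`, while `dist z ζ ≤ ψ(x) / x → 0`.
-/

open Filter Topology NNReal

namespace MvPolynomial

theorem contDiff_eval {𝕜 σ : Type*} [NontriviallyNormedField 𝕜] [Fintype σ]
    (p : MvPolynomial σ 𝕜) {n : WithTop ℕ∞} : ContDiff 𝕜 n fun x : σ → 𝕜 => eval x p := by
  induction p using MvPolynomial.induction_on with
  | C a => simpa using contDiff_const
  | add p q hp hq => simpa using hp.add hq
  | mul_X p i hp => simpa using hp.mul (contDiff_apply 𝕜 𝕜 i)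

theorem exists_intCast_eq_pow_mul_eval_div {σ K : Type*} [Field K] {P : MvPolynomial σ ℤ}
    {r : ℕ} (hP : P.totalDegree ≤ r) {x : ℤ} (hx : (x : K) ≠ 0) (y : σ → ℤ) :
    ∃ N : ℤ, (N : K) = (x : K) ^ r * eval (fun i => (y i : K) / x) (map (Int.castRingHom K) P) := by
  refine ⟨∑ d ∈ P.support, P.coeff d * x ^ (r - d.degree) * ∏ i ∈ d.support, y i ^ d i, ?_⟩
  rw [eval_map, eval₂_eq, Finset.mul_sum]
  push_cast
  refine Finset.sum_congr rfl fun d hd => ?_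
  have hdr : d.degree ≤ r := (le_totalDegree hd).trans hP
  rw [← Nat.sub_add_cancel hdr, pow_add, Nat.add_sub_cancel]
  simp only [div_pow, Finset.prod_div_distrib, Finset.prod_pow_eq_pow_sum, eq_intCast]
  field_simp
  rfl

theorem eval_div_eq_zero_of_abs_lt_one {σ K : Type*} [Field K] [LinearOrder K]
    [IsStrictOrderedRing K] {P : MvPolynomial σ ℤ} {r : ℕ} (hP : P.totalDegree ≤ r) {x : ℤ}
    (hx : x ≠ 0) (y : σ → ℤ)
    (h : |(x : K) ^ r * eval (fun i => (y i : K) / x) (map (Int.castRingHom K) P)| < 1) :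
    eval (fun i => (y i : K) / x) (map (Int.castRingHom K) P) = 0 := by
  obtain ⟨N, hN⟩ := exists_intCast_eq_pow_mul_eval_div hP (Int.cast_ne_zero (α := K) |>.2 hx) y
  rw [← hN, ← Int.cast_abs, ← Int.cast_one, Int.cast_lt, Int.abs_lt_one_iff] at h
  rw [h, Int.cast_zero, eq_comm, mul_eq_zero] at hN
  exact hN.resolve_left (pow_ne_zero _ (Int.cast_ne_zero.2 hx))

theorem eval_div_eq_zero_of_lipschitzOnWith {σ : Type*} [Fintype σ] {P : MvPolynomial σ ℤ}
    {r : ℕ} (hP : P.totalDegree ≤ r) {K : ℝ≥0} {U : Set (σ → ℝ)}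
    (hf : LipschitzOnWith K (fun z => eval z (map (Int.castRingHom ℝ) P)) U) {ζ : σ → ℝ}
    (hζU : ζ ∈ U) (hζ : eval ζ (map (Int.castRingHom ℝ) P) = 0) {x : ℤ} (hx : x ≠ 0)
    {y : σ → ℤ} (hyU : (fun i => (y i : ℝ) / x) ∈ U)
    (hsmall : K * (|(x : ℝ)| ^ r * dist (fun i => (y i : ℝ) / x) ζ) < 1) :
    eval (fun i => (y i : ℝ) / x) (map (Int.castRingHom ℝ) P) = 0 := by
  refine eval_div_eq_zero_of_abs_lt_one hP hx y (lt_of_le_of_lt ?_ hsmall)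
  calc |(x : ℝ) ^ r * eval (fun i => (y i : ℝ) / x) (map (Int.castRingHom ℝ) P)|
      = |(x : ℝ)| ^ r * dist (eval (fun i => (y i : ℝ) / x) (map (Int.castRingHom ℝ) P))
          (eval ζ (map (Int.castRingHom ℝ) P)) := by
        rw [hζ, Real.dist_0_eq_abs, abs_mul, abs_pow]
    _ ≤ |(x : ℝ)| ^ r * (K * dist (fun i => (y i : ℝ) / x) ζ) := by
        gcongr; exact hf.dist_le_mul _ hyU _ hζU
    _ = K * (|(x : ℝ)| ^ r * dist (fun i => (y i : ℝ) / x) ζ) := by ring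

end MvPolynomial

theorem tendsto_pow_mul_abs_div_self_of_isLittleO {ψ : ℝ → ℝ} {r : ℕ}
    (hψ : ψ =o[atTop] fun t : ℝ => t ^ (-(r : ℝ) + 1)) :
    Tendsto (fun t => t ^ r * |ψ t| / t) atTop (𝓝 0) := by
  have := hψ.tendsto_div_nhds_zero.abs
  rw [abs_zero] at this
  refine this.congr' ?_
  filter_upwards [eventually_gt_atTop 0] with t ht
  rw [abs_div, abs_of_pos (Real.rpow_pos_of_pos ht _), Real.rpow_add ht, Real.rpow_one,
    Real.rpow_neg ht.le, Real.rpow_natCast]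
  field_simp

theorem pow_mul_dist_div_le {ι : Type*} [Fintype ι] {x δ : ℝ} (hx : 0 < x) (hδ : 0 ≤ δ)
    (r : ℕ) {ζ y : ι → ℝ} (h : ∀ i, |x * ζ i - y i| ≤ δ) :
    x ^ r * dist (fun i => y i / x) ζ ≤ x ^ r * δ / x := by
  rw [mul_div_assoc]
  refine mul_le_mul_of_nonneg_left ((dist_pi_le_iff (div_nonneg hδ hx.le)).2 fun i => ?_)
    (by positivity)
  rw [Real.dist_eq, show y i / x - ζ i = -(x * ζ i - y i) / x by field_simp; ring, abs_div,
    abs_neg, abs_of_pos hx]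
  exact div_le_div_of_nonneg_right (h i) hx.le

open MvPolynomial in
/-- If `P ∈ ℤ[X₁,…,X_k]` has absolute degree `r`, `V` is its real zero set,
`T = V ∩ ℚ^k`, `ψ(t) = o(t^{-r+1})` as `t → ∞`, `ζ ∈ V`, and for arbitrarily large integers `x`
there are integers `y₁,…,y_k` with `max_j |x ζ_j − y_j| ≤ ψ(x)`, then `ζ` lies in the
topological closure of `T`. -/
theorem approx_on_variety_mem_closure (k r : ℕ) (P : MvPolynomial (Fin k) ℤ)
    (hdeg : P.totalDegree = r)
    (V : Set (Fin k → ℝ))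
    (hV : V = {z : Fin k → ℝ |
        MvPolynomial.eval z (MvPolynomial.map (Int.castRingHom ℝ) P) = 0})
    (T : Set (Fin k → ℝ))
    (hT : T = {z ∈ V | ∀ j, ∃ q : ℚ, (q : ℝ) = z j})
    (ψ : ℝ → ℝ)
    (hψ : ψ =o[atTop] fun t : ℝ => t ^ (-(r : ℝ) + 1))
    (ζ : Fin k → ℝ) (hζ : ζ ∈ V)
    (happrox : ∀ N : ℕ, ∃ x : ℕ, N ≤ x ∧ ∃ y : Fin k → ℤ,
        ∀ j, |(x : ℝ) * ζ j - (y j : ℝ)| ≤ ψ (x : ℝ)) :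
    ζ ∈ closure T := by
  subst hV hT
  have hC1 : ContDiffAt ℝ 1 (fun z => eval z (map (Int.castRingHom ℝ) P)) ζ :=
    (contDiff_eval _).contDiffAt
  obtain ⟨K, U, hU, hf⟩ := hC1.exists_lipschitzOnWith
  obtain ⟨ρ, hρ, hball⟩ := Metric.mem_nhds_iff.1 hU
  refine Metric.mem_closure_iff.2 fun ε hε => ?_
  have hg := (tendsto_pow_mul_abs_div_self_of_isLittleO hψ).comp tendsto_natCast_atTop_atTop
  have hKg : Tendsto (fun x : ℕ => K * ((x : ℝ) ^ r * |ψ x| / x)) atTop (𝓝 0) := by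
    simpa using hg.const_mul (K : ℝ)
  have hsmall : ∀ᶠ x : ℕ in atTop, 1 ≤ x ∧ (x : ℝ) ^ r * |ψ x| / x < min ε ρ ∧
      K * ((x : ℝ) ^ r * |ψ x| / x) < 1 :=
    (eventually_ge_atTop 1).and <| (hg.eventually (gt_mem_nhds (lt_min hε hρ))).and <|
      hKg.eventually (gt_mem_nhds one_pos)
  obtain ⟨x, ⟨hx, hxε, hxK⟩, y, hy⟩ := (hsmall.and_frequently (frequently_atTop.2 happrox)).exists
  have hx1 : (1 : ℝ) ≤ x := by exact_mod_cast hx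
  have hxz : ((x : ℤ) : ℝ) = x := Int.cast_natCast x
  set z := fun j => (y j : ℝ) / ((x : ℤ) : ℝ)
  have hdist : (x : ℝ) ^ r * dist z ζ ≤ (x : ℝ) ^ r * |ψ x| / x := by
    simpa only [z, hxz] using pow_mul_dist_div_le (by positivity) (abs_nonneg _) r
      fun j => (hy j).trans (le_abs_self _)
  have hzε : dist z ζ < min ε ρ :=
    ((le_mul_of_one_le_left dist_nonneg (one_le_pow₀ hx1)).trans hdist).trans_lt hxε
  have hzK : (K : ℝ) * (|((x : ℤ) : ℝ)| ^ r * dist z ζ) < 1 := by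
    rw [hxz, abs_of_pos (by positivity)]
    exact (mul_le_mul_of_nonneg_left hdist K.2).trans_lt hxK
  have hzU : z ∈ U := hball (Metric.mem_ball.2 (hzε.trans_le (min_le_right _ _)))
  refine ⟨z, ⟨?_, fun j => ⟨y j / x, by simp [z]⟩⟩, ?_⟩
  · exact eval_div_eq_zero_of_lipschitzOnWith hdeg.le hf (mem_of_mem_nhds hU) hζ
      (by exact_mod_cast (Nat.one_le_iff_ne_zero.1 hx)) hzU hzK
  · rw [dist_comm]; exact hzε.trans_le (min_le_left _ _)
end

section
/- For every integer k ≥ 1 and every ζ ∈ ℝ^k, ω_k(ζ) ≥ (χ_k(ζ) − k + 1)/k. -/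
open Filter

/-- distance from a real number to the nearest integer -/
noncomputable def distNearestInt (t : ℝ) : ℝ := |t - round t|

/-- exponents `ν` admissible for the classical simultaneous approximation exponent `ω_k` -/
def omegaSet (k : ℕ) (ζ : Fin k → ℝ) : Set ℝ :=
  {ν | ∀ N : ℕ, ∃ x : ℕ, N ≤ x ∧ 0 < x ∧
      ∀ j, distNearestInt ((x : ℝ) * ζ j) ≤ (x : ℝ) ^ (-ν)}

/-- the classical exponent `ω_k` of simultaneous rational approximation -/
noncomputable def omegaExp (k : ℕ) (ζ : Fin k → ℝ) : EReal :=
  sSup ((fun ν : ℝ => (ν : EReal)) '' omegaSet k ζ)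

/-- exponents `ν` admissible for the multi-denominator exponent `χ_k` -/
def chiSet (k : ℕ) (ζ : Fin k → ℝ) : Set ℝ :=
  {ν | ∀ X₀ : ℝ, ∃ X : ℝ, X₀ ≤ X ∧ ∃ x : Fin k → ℤ,
      (∀ j, x j ≠ 0) ∧ (∀ j, (|x j| : ℝ) ≤ X) ∧
      ∀ j, distNearestInt ((x j : ℝ) * ζ j) ≤ X ^ (-ν)}

/-- the multi-denominator exponent `χ_k` of simultaneous approximation -/
noncomputable def chiExp (k : ℕ) (ζ : Fin k → ℝ) : EReal :=
  sSup ((fun ν : ℝ => (ν : EReal)) '' chiSet k ζ)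

/-- exponents `μ` admissible for the one-dimensional exponent `λ₁` -/
def lambda1Set (ζ : ℝ) : Set ℝ :=
  {μ | ∀ N : ℕ, ∃ q : ℕ, N ≤ q ∧ 0 < q ∧
      distNearestInt ((q : ℝ) * ζ) ≤ (q : ℝ) ^ (-μ)}

/-- the classical one-dimensional irrationality exponent `λ₁` -/
noncomputable def lambda1Exp (ζ : ℝ) : EReal :=
  sSup ((fun μ : ℝ => (μ : EReal)) '' lambda1Set ζ)

/-!
Given nonzero integers `x₁, …, x_k` of size at most `X` with `‖x_j ζ_j‖ ≤ X^(-ν)`, the product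
`q = x₁ ⋯ x_k` is a common denominator with `|q| ≤ X^k` and `‖q ζ_j‖ ≤ X^(k-1-ν) ≤ |q|^(-(ν-k+1)/k)`,
since `q ζ_j` is an integer multiple of `x_j ζ_j`. The definition of `ω_k` also asks for arbitrarily
large denominators: unless some `q ζ` lies in `ℤ^k` (and then every exponent is admissible),
the finitely many `q ≤ N` keep every `max_j ‖q ζ_j‖` above a fixed `δ > 0`, which the products beat
once `X` is large.
-/

open Topology Finset

lemma distNearestInt_nonneg (t : ℝ) : 0 ≤ distNearestInt t := abs_nonneg _

lemma distNearestInt_le_half (t : ℝ) : distNearestInt t ≤ 1 / 2 := abs_sub_round t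

lemma distNearestInt_intCast_mul_le (m : ℤ) (t : ℝ) :
    distNearestInt (m * t) ≤ |(m : ℝ)| * distNearestInt t :=
  calc |m * t - round (m * t)| ≤ |m * t - ((m * round t : ℤ) : ℝ)| := round_le _ _
    _ = |(m : ℝ)| * |t - round t| := by rw [← abs_mul]; push_cast; ring_nf

lemma distNearestInt_neg (t : ℝ) : distNearestInt (-t) = distNearestInt t := by
  have key (s : ℝ) : distNearestInt (-s) ≤ distNearestInt s := by
    simpa using distNearestInt_intCast_mul_le (-1) s
  exact le_antisymm (key t) (by simpa using key (-t))

lemma distNearestInt_abs_mul (m : ℤ) (t : ℝ) :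
    distNearestInt (|(m : ℝ)| * t) = distNearestInt (m * t) := by
  rcases abs_choice (m : ℝ) with h | h <;> simp [h, distNearestInt_neg]

lemma distNearestInt_prod_mul_le {ι : Type*} [Fintype ι] [DecidableEq ι] (x : ι → ℤ) (t : ℝ)
    (j : ι) :
    distNearestInt ((∏ i, x i : ℤ) * t) ≤
      (∏ i ∈ univ.erase j, |(x i : ℝ)|) * distNearestInt (x j * t) := by
  rw [← prod_erase_mul _ _ (mem_univ j)]
  calc _ = distNearestInt ((∏ i ∈ univ.erase j, x i : ℤ) * (x j * t)) := by push_cast; ring_nf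
    _ ≤ _ := by
        simpa [abs_prod] using distNearestInt_intCast_mul_le (∏ i ∈ univ.erase j, x i) (x j * t)

lemma prod_abs_le_pow_card {ι : Type*} (s : Finset ι) (x : ι → ℤ) {X : ℝ}
    (hX : ∀ i ∈ s, |(x i : ℝ)| ≤ X) : ∏ i ∈ s, |(x i : ℝ)| ≤ X ^ s.card := by
  simpa using prod_le_prod (fun i _ => abs_nonneg _) hX

theorem exists_nat_distNearestInt_mul_le {ι : Type*} [Fintype ι] (ζ : ι → ℝ) (x : ι → ℤ)
    {X δ : ℝ} (hx0 : ∀ j, x j ≠ 0) (hxX : ∀ j, |(x j : ℝ)| ≤ X)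
    (hxδ : ∀ j, distNearestInt (x j * ζ j) ≤ δ) :
    ∃ q : ℕ, 0 < q ∧ (q : ℝ) ≤ X ^ Fintype.card ι ∧
      ∀ j, distNearestInt (q * ζ j) ≤ X ^ (Fintype.card ι - 1) * δ := by
  classical
  have hq : ((∏ i, x i).natAbs : ℝ) = |((∏ i, x i : ℤ) : ℝ)| := by simp [Nat.cast_natAbs]
  refine ⟨(∏ i, x i).natAbs, Int.natAbs_pos.2 (prod_ne_zero_iff.2 fun i _ => hx0 i), ?_,
    fun j => ?_⟩
  · rw [hq, Int.cast_prod, abs_prod]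
    exact prod_abs_le_pow_card _ _ fun i _ => hxX i
  · have hX : 0 ≤ X := (abs_nonneg _).trans (hxX j)
    rw [hq, distNearestInt_abs_mul]
    calc _ ≤ (∏ i ∈ univ.erase j, |(x i : ℝ)|) * distNearestInt (x j * ζ j) :=
          distNearestInt_prod_mul_le x (ζ j) j
      _ ≤ X ^ (Fintype.card ι - 1) * δ := by
          refine mul_le_mul ?_ (hxδ j) (distNearestInt_nonneg _) (pow_nonneg hX _)
          simpa [card_erase_of_mem] using prod_abs_le_pow_card (univ.erase j) x fun i _ => hxX i

lemma mem_omegaSet_of_nonpos {k : ℕ} (ζ : Fin k → ℝ) {ν : ℝ} (hν : ν ≤ 0) :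
    ν ∈ omegaSet k ζ := by
  intro N
  refine ⟨N + 1, by omega, by omega, fun j => ?_⟩
  have h1 : (1 : ℝ) ≤ ((N + 1 : ℕ) : ℝ) ^ (-ν) :=
    Real.one_le_rpow (by exact_mod_cast N.succ_pos) (by linarith)
  linarith [distNearestInt_le_half (((N + 1 : ℕ) : ℝ) * ζ j)]

lemma omegaSet_eq_univ_of_forall_distNearestInt_eq_zero {k : ℕ} (ζ : Fin k → ℝ) {q : ℕ}
    (hq : 0 < q) (hζ : ∀ j, distNearestInt (q * ζ j) = 0) : omegaSet k ζ = Set.univ := by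
  refine Set.eq_univ_of_forall fun ν N => ⟨q * (N + 1), ?_, by positivity, fun j => ?_⟩
  · nlinarith
  · calc distNearestInt (((q * (N + 1) : ℕ) : ℝ) * ζ j)
          = distNearestInt (((N + 1 : ℕ) : ℤ) * (q * ζ j)) := by push_cast; ring_nf
      _ ≤ |(((N + 1 : ℕ) : ℤ) : ℝ)| * distNearestInt (q * ζ j) :=
          distNearestInt_intCast_mul_le _ _
      _ ≤ _ := by rw [hζ j, mul_zero]; positivity

lemma exists_pos_forall_distNearestInt_lt_imp_lt {ι : Type*} (ζ : ι → ℝ)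
    (hζ : ∀ q : ℕ, 0 < q → ∃ j, distNearestInt (q * ζ j) ≠ 0) (N : ℕ) :
    ∃ δ > 0, ∀ q : ℕ, 0 < q → (∀ j, distNearestInt (q * ζ j) < δ) → N < q := by
  have hev : ∀ᶠ δ in 𝓝[>] (0 : ℝ), ∀ q ∈ Icc 1 N, ∃ j, δ ≤ distNearestInt (q * ζ j) := by
    refine (eventually_all_finset _).2 fun q hq => ?_
    obtain ⟨j, hj⟩ := hζ q (mem_Icc.1 hq).1
    exact ((eventually_le_nhds ((distNearestInt_nonneg _).lt_of_ne' hj)).filter_mono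
      nhdsWithin_le_nhds).mono fun δ hδ => ⟨j, hδ⟩
  obtain ⟨δ, hδ, hδpos⟩ := (hev.and self_mem_nhdsWithin).exists
  refine ⟨δ, hδpos, fun q hq hsmall => ?_⟩
  by_contra! hqN
  obtain ⟨j, hj⟩ := hδ q (mem_Icc.2 ⟨hq, hqN⟩)
  exact (hsmall j).not_ge hj

lemma mem_omegaSet_of_mem_chiSet {k : ℕ} (hk : 1 ≤ k) {ζ : Fin k → ℝ} {ν : ℝ}
    (hν : ν ∈ chiSet k ζ) : (ν - k + 1) / k ∈ omegaSet k ζ := by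
  set μ := (ν - k + 1) / k with hμ
  rcases le_or_gt μ 0 with hμ0 | hμ0
  · exact mem_omegaSet_of_nonpos ζ hμ0
  by_cases htors : ∃ q : ℕ, 0 < q ∧ ∀ j, distNearestInt (q * ζ j) = 0
  · obtain ⟨q, hq, hζ⟩ := htors
    rw [omegaSet_eq_univ_of_forall_distNearestInt_eq_zero ζ hq hζ]
    trivial
  push Not at htors
  intro N
  obtain ⟨δ, hδ, hlarge⟩ := exists_pos_forall_distNearestInt_lt_imp_lt ζ htors N
  have hkμ : k * μ = ν - k + 1 := by rw [hμ]; field_simp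
  have hsmall : ∀ᶠ X : ℝ in atTop, X ^ (-(k * μ)) < δ :=
    (tendsto_rpow_neg_atTop (by positivity)).eventually (gt_mem_nhds hδ)
  obtain ⟨X, ⟨x, hx0, hxX, hxd⟩, hXδ, hX1⟩ :=
    ((frequently_atTop.2 hν).and_eventually (hsmall.and (eventually_ge_atTop 1))).exists
  obtain ⟨q, hq0, hqX, hqd⟩ := exists_nat_distNearestInt_mul_le ζ x hx0 hxX hxd
  have hX0 : 0 < X := by linarith
  have hqd' (j : Fin k) : distNearestInt (q * ζ j) ≤ X ^ (-(k * μ)) := by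
    calc _ ≤ X ^ (k - 1) * X ^ (-ν) := by simpa using hqd j
      _ = X ^ (-(k * μ)) := by
          rw [← Real.rpow_natCast, ← Real.rpow_add hX0, Nat.cast_sub hk, hkμ]
          ring_nf
  refine ⟨q, (hlarge q hq0 fun j => (hqd' j).trans_lt hXδ).le, hq0, fun j => (hqd' j).trans ?_⟩
  calc X ^ (-(k * μ)) = (X ^ k) ^ (-μ) := by
        rw [← Real.rpow_natCast, ← Real.rpow_mul hX0.le, neg_mul_eq_mul_neg]
    _ ≤ (q : ℝ) ^ (-μ) := by
        simpa using Real.rpow_le_rpow_of_nonpos (by positivity) hqX (by linarith)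

lemma sub_add_one_div_sSup_le_sSup {S T : Set ℝ} {k : ℝ} (hk : 0 < k) (hT : T.Nonempty)
    (h : ∀ ν ∈ S, (ν - k + 1) / k ∈ T) :
    (sSup ((fun ν : ℝ => (ν : EReal)) '' S) - k + 1) / k ≤
      sSup ((fun ν : ℝ => (ν : EReal)) '' T) := by
  set W := sSup ((fun ν : ℝ => (ν : EReal)) '' T)
  rcases eq_or_ne W ⊤ with hW | hW
  · rw [hW]; exact le_top
  obtain ⟨ν₀, hν₀⟩ := hT
  have hW' : W ≠ ⊥ := ne_bot_of_le_ne_bot (EReal.coe_ne_bot ν₀) (le_sSup ⟨ν₀, hν₀, rfl⟩)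
  obtain ⟨w, hw⟩ : ∃ w : ℝ, W = w := ⟨W.toReal, (EReal.coe_toReal hW hW').symm⟩
  have hS : sSup ((fun ν : ℝ => (ν : EReal)) '' S) ≤ ((k * w + k - 1 : ℝ) : EReal) := by
    refine sSup_le ?_
    rintro _ ⟨ν, hν, rfl⟩
    have hνW : (((ν - k + 1) / k : ℝ) : EReal) ≤ W := le_sSup ⟨_, h ν hν, rfl⟩
    rw [hw, EReal.coe_le_coe_iff, div_le_iff₀ hk] at hνW
    exact EReal.coe_le_coe_iff.2 (by linarith)
  calc _ ≤ (((k * w + k - 1 : ℝ) : EReal) - k + 1) / k :=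
        EReal.div_le_div_right_of_nonneg (by positivity)
          (add_le_add (EReal.sub_le_sub hS le_rfl) le_rfl)
    _ = W := by
        rw [hw, ← EReal.coe_one, ← EReal.coe_sub, ← EReal.coe_add, ← EReal.coe_div]
        congr 1
        field_simp
        ring

/-- For every integer `k ≥ 1` and every `ζ ∈ ℝ^k`,
`ω_k(ζ) ≥ (χ_k(ζ) − k + 1)/k`. -/
theorem omegaExp_ge (k : ℕ) (hk : 1 ≤ k) (ζ : Fin k → ℝ) :
    (chiExp k ζ - (k : EReal) + 1) / (k : EReal) ≤ omegaExp k ζ := by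
  have h := sub_add_one_div_sSup_le_sSup (S := chiSet k ζ) (k := k) (by positivity)
    ⟨0, mem_omegaSet_of_nonpos ζ le_rfl⟩ fun ν hν => mem_omegaSet_of_mem_chiSet hk hν
  simpa only [chiExp, omegaExp, EReal.coe_natCast] using h
end

section
/- Let P ∈ ℤ[X₁,…,X_k] have absolute degree r, V its real zero set, T = V ∩ ℚ^k, and ψ(X) = o(X^(−kr+1)). If ζ ∈ V and for arbitrarily large X there exist nonzero integers x₁,…,x_k and integers y₁,…,y_k with max_j |x_j| ≤ X and max_j |x_j ζ_j − y_j| ≤ ψ(X), then ζ lies in the closure of T. -/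
/-!
If `P(y/x) ≠ 0` for a rational point `y/x`, then `(∏ x_j ^ r) · P(y/x)` is a nonzero integer,
so `|P(y/x)| ≥ ∏ |x_j| ^ (-r)`. Since `P(ζ) = 0` and `P` is locally Lipschitz, also
`|P(y/x)| ≲ dist(y/x, ζ) ≤ ψ(X) / min_j |x_j|`, while `∏ |x_j| ^ r ≤ min_j |x_j| · X ^ (kr - 1)`;
the minimal denominator cancels and the two bounds contradict each other once
`ψ(X) X ^ (kr - 1)` is small. Hence the approximations `y/x` lie in `T` and tend to `ζ`.
When `kr = 0` the polynomial is constant, and `T` is the dense set of all rational points.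
-/

open Filter Asymptotics MvPolynomial Finset Topology

section Liouville

variable {σ : Type*} [Fintype σ] {P : MvPolynomial σ ℤ} {r : ℕ} {x : σ → ℤ}

theorem exists_int_eq_prod_pow_mul_eval_div (hP : P.totalDegree ≤ r) (hx : ∀ j, x j ≠ 0)
    (y : σ → ℤ) : ∃ I : ℤ, (I : ℝ) =
      (∏ j, (x j : ℝ) ^ r) * eval (fun j => (y j : ℝ) / x j) (map (Int.castRingHom ℝ) P) := by
  refine ⟨∑ a ∈ P.support, P.coeff a * ∏ j, y j ^ a j * x j ^ (r - a j), ?_⟩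
  rw [eval_map, eval₂_eq', Finset.mul_sum]
  push_cast
  refine Finset.sum_congr rfl fun a ha => ?_
  rw [mul_left_comm, ← Finset.prod_mul_distrib]
  congr 1
  refine Finset.prod_congr rfl fun j _ => ?_
  have haj : a j ≤ r :=
    ((P.le_degreeOf_of_mem_support j ha).trans (P.degreeOf_le_totalDegree j)).trans hP
  rw [pow_sub₀ _ (Int.cast_ne_zero.mpr (hx j)) haj, div_pow]
  field_simp

theorem one_le_abs_eval_div_mul_prod_pow (hP : P.totalDegree ≤ r) (hx : ∀ j, x j ≠ 0)
    {y : σ → ℤ}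
    (hne : eval (fun j => (y j : ℝ) / x j) (map (Int.castRingHom ℝ) P) ≠ 0) :
    1 ≤ |eval (fun j => (y j : ℝ) / x j) (map (Int.castRingHom ℝ) P)| *
      ∏ j, |(x j : ℝ)| ^ r := by
  obtain ⟨I, hI⟩ := exists_int_eq_prod_pow_mul_eval_div hP hx y
  have hprod : ∏ j, (x j : ℝ) ^ r ≠ 0 :=
    prod_ne_zero_iff.mpr fun j _ => pow_ne_zero _ (Int.cast_ne_zero.mpr (hx j))
  have hI0 : I ≠ 0 := by exact_mod_cast hI ▸ mul_ne_zero hprod hne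
  calc (1 : ℝ) ≤ |(I : ℝ)| := by exact_mod_cast Int.one_le_abs hI0
    _ = _ := by simp only [hI, abs_mul, mul_comm, Finset.abs_prod, abs_pow]

end Liouville

section Approximation

variable {σ : Type*} [Fintype σ] [Nonempty σ] {x y : σ → ℤ} {ζ : σ → ℝ} {η : ℝ}

theorem prod_pow_le_mul_pow_card_mul_sub_one {a : σ → ℝ} {X : ℝ} {r : ℕ}
    (ha : ∀ j, 0 ≤ a j) (haX : ∀ j, a j ≤ X) (j₀ : σ) (hr : 1 ≤ r) :
    ∏ j, a j ^ r ≤ a j₀ * X ^ (Fintype.card σ * r - 1) := by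
  classical
  have hcard : 1 ≤ Fintype.card σ := Fintype.card_pos
  have hrest : ∏ j ∈ univ.erase j₀, a j ^ r ≤ X ^ ((Fintype.card σ - 1) * r) := by
    calc ∏ j ∈ univ.erase j₀, a j ^ r ≤ ∏ _j ∈ univ.erase j₀, X ^ r :=
          prod_le_prod (fun j _ => pow_nonneg (ha j) r) fun j _ =>
            pow_le_pow_left₀ (ha j) (haX j) r
      _ = X ^ ((Fintype.card σ - 1) * r) := by
          rw [prod_const, card_erase_of_mem (mem_univ j₀), card_univ, ← pow_mul, mul_comm]
  have hexp : Fintype.card σ * r - 1 = (r - 1) + (Fintype.card σ - 1) * r := by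
    obtain ⟨c, hc⟩ := Nat.exists_eq_add_of_le' hcard
    obtain ⟨s, rfl⟩ := Nat.exists_eq_add_of_le' hr
    rw [hc, Nat.add_sub_cancel, Nat.add_sub_cancel]
    ring_nf
    omega
  rw [← mul_prod_erase univ _ (mem_univ j₀), hexp, pow_add, ← mul_assoc]
  calc a j₀ ^ r * ∏ j ∈ univ.erase j₀, a j ^ r
      = a j₀ * a j₀ ^ (r - 1) * ∏ j ∈ univ.erase j₀, a j ^ r := by
        rw [← pow_succ', Nat.sub_add_cancel hr]
    _ ≤ a j₀ * X ^ (r - 1) * X ^ ((Fintype.card σ - 1) * r) := by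
        have := ha j₀
        have := haX j₀
        have : 0 ≤ X := (ha j₀).trans (haX j₀)
        gcongr
        exact prod_nonneg fun j _ => pow_nonneg (ha j) r

theorem dist_div_le_div_of_abs_mul_sub_le (hxy : ∀ j, |(x j : ℝ) * ζ j - y j| ≤ η) {m : ℝ}
    (hm : 0 < m) (hmx : ∀ j, m ≤ |(x j : ℝ)|) : dist (fun j => (y j : ℝ) / x j) ζ ≤ η / m := by
  have hη : 0 ≤ η := (abs_nonneg _).trans (hxy (Classical.arbitrary σ))
  refine (dist_pi_le_iff (by positivity)).mpr fun j => ?_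
  have hxj : (x j : ℝ) ≠ 0 := abs_pos.mp (hm.trans_le (hmx j))
  calc dist ((y j : ℝ) / x j) (ζ j) = |(x j : ℝ) * ζ j - y j| / |(x j : ℝ)| := by
        rw [Real.dist_eq, ← abs_div, ← abs_neg]
        congr 1
        field_simp
        ring
    _ ≤ η / m := div_le_div₀ hη (hxy j) hm (hmx j)

theorem prod_abs_pow_mul_dist_div_le {X : ℝ} {r : ℕ} (hr : 1 ≤ r) (hx : ∀ j, x j ≠ 0)
    (hxX : ∀ j, |(x j : ℝ)| ≤ X) (hxy : ∀ j, |(x j : ℝ) * ζ j - y j| ≤ η) :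
    (∏ j, |(x j : ℝ)| ^ r) * dist (fun j => (y j : ℝ) / x j) ζ ≤
      η * X ^ (Fintype.card σ * r - 1) := by
  obtain ⟨j₀, hj₀⟩ := Finite.exists_min fun j => |(x j : ℝ)|
  have hx₀ : 0 < |(x j₀ : ℝ)| := abs_pos.mpr (Int.cast_ne_zero.mpr (hx j₀))
  have hη : 0 ≤ η := (abs_nonneg _).trans (hxy j₀)
  have hX : 0 ≤ X := hx₀.le.trans (hxX j₀)
  calc (∏ j, |(x j : ℝ)| ^ r) * dist (fun j => (y j : ℝ) / x j) ζ
      ≤ (|(x j₀ : ℝ)| * X ^ (Fintype.card σ * r - 1)) * (η / |(x j₀ : ℝ)|) :=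
        mul_le_mul (prod_pow_le_mul_pow_card_mul_sub_one (fun j => abs_nonneg _) hxX j₀ hr)
          (dist_div_le_div_of_abs_mul_sub_le hxy hx₀ hj₀) dist_nonneg (by positivity)
    _ = η * X ^ (Fintype.card σ * r - 1) := by field_simp

theorem eval_div_eq_zero_of_abs_eval_le {P : MvPolynomial σ ℤ} {r : ℕ} (hP : P.totalDegree ≤ r)
    (hr : 1 ≤ r) {L X : ℝ} (hL : 0 ≤ L) (hx : ∀ j, x j ≠ 0) (hxX : ∀ j, |(x j : ℝ)| ≤ X)
    (hxy : ∀ j, |(x j : ℝ) * ζ j - y j| ≤ η)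
    (hPL : |eval (fun j => (y j : ℝ) / x j) (map (Int.castRingHom ℝ) P)| ≤
      L * dist (fun j => (y j : ℝ) / x j) ζ)
    (hsmall : L * (η * X ^ (Fintype.card σ * r - 1)) < 1) :
    eval (fun j => (y j : ℝ) / x j) (map (Int.castRingHom ℝ) P) = 0 := by
  by_contra hne
  have hprod : 0 ≤ ∏ j, |(x j : ℝ)| ^ r := by positivity
  have := one_le_abs_eval_div_mul_prod_pow hP hx hne
  have := prod_abs_pow_mul_dist_div_le hr hx hxX hxy
  nlinarith

end Approximation

theorem tendsto_mul_pow_of_isLittleO_rpow {ψ : ℝ → ℝ} {n : ℕ} (hn : 1 ≤ n)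
    (hψ : ψ =o[atTop] fun t : ℝ => t ^ (-(n : ℝ) + 1)) :
    Tendsto (fun X => ψ X * X ^ (n - 1)) atTop (𝓝 0) := by
  refine hψ.tendsto_div_nhds_zero.congr' ?_
  filter_upwards [eventually_ge_atTop 0] with X hX
  rw [show -(n : ℝ) + 1 = -((n - 1 : ℕ) : ℝ) by push_cast [Nat.cast_sub hn]; ring,
    Real.rpow_neg hX, Real.rpow_natCast, div_inv_eq_mul]

theorem tendsto_of_tendsto_mul_pow {ψ : ℝ → ℝ} {m : ℕ}
    (h : Tendsto (fun X => ψ X * X ^ m) atTop (𝓝 0)) : Tendsto ψ atTop (𝓝 0) := by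
  refine squeeze_zero_norm' ?_ (by simpa using h.norm)
  filter_upwards [eventually_ge_atTop 1] with X hX
  rw [Real.norm_eq_abs]
  exact le_mul_of_one_le_right (abs_nonneg _) (one_le_pow₀ (hX.trans (le_abs_self X)))

theorem dense_setOf_forall_exists_rat_cast_eq (ι : Type*) :
    Dense {z : ι → ℝ | ∀ j, ∃ q : ℚ, (q : ℝ) = z j} :=
  (dense_pi Set.univ fun _ _ => Rat.denseRange_cast).mono
    fun z (hz : z ∈ Set.pi _ _) j => hz j trivial

theorem eval_map_eq_of_totalDegree_eq_zero {σ : Type*} {P : MvPolynomial σ ℤ}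
    (hP : P.totalDegree = 0) (z w : σ → ℝ) :
    eval z (map (Int.castRingHom ℝ) P) = eval w (map (Int.castRingHom ℝ) P) := by
  rw [totalDegree_eq_zero_iff_eq_C.mp hP]
  simp

/-- Let `P ∈ ℤ[X₁,…,X_k]` have absolute degree `r`, `V` its real zero set,
`T = V ∩ ℚ^k`, and `ψ(X) = o(X^(−kr+1))`. If `ζ ∈ V` and for arbitrarily large `X` there are
nonzero integers `x₁,…,x_k` and integers `y₁,…,y_k` with `max_j |x_j| ≤ X` and
`max_j |x_j ζ_j − y_j| ≤ ψ(X)`, then `ζ` lies in the closure of `T`. -/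
theorem multi_denominator_approx_mem_closure (k r : ℕ) (P : MvPolynomial (Fin k) ℤ)
    (hdeg : P.totalDegree = r)
    (V : Set (Fin k → ℝ))
    (hV : V = {z : Fin k → ℝ |
        MvPolynomial.eval z (MvPolynomial.map (Int.castRingHom ℝ) P) = 0})
    (T : Set (Fin k → ℝ))
    (hT : T = {z ∈ V | ∀ j, ∃ q : ℚ, (q : ℝ) = z j})
    (ψ : ℝ → ℝ)
    (hψ : ψ =o[atTop] fun t : ℝ => t ^ (-((k * r : ℕ) : ℝ) + 1))
    (ζ : Fin k → ℝ) (hζ : ζ ∈ V)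
    (happrox : ∀ X₀ : ℝ, ∃ X : ℝ, X₀ ≤ X ∧ ∃ x y : Fin k → ℤ,
        (∀ j, x j ≠ 0) ∧ (∀ j, (|x j| : ℝ) ≤ X) ∧
        ∀ j, |(x j : ℝ) * ζ j - (y j : ℝ)| ≤ ψ X) :
    ζ ∈ closure T := by
  subst hV hT
  have hζ0 : eval ζ (map (Int.castRingHom ℝ) P) = 0 := hζ
  rcases (k * r).eq_zero_or_pos with hkr | hkr
  · have hP : P.totalDegree = 0 := by
      rcases Nat.mul_eq_zero.mp hkr with rfl | rfl
      exacts [by rw [P.eq_C_of_isEmpty, totalDegree_C], hdeg]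
    have hV : ∀ z : Fin k → ℝ, eval z (map (Int.castRingHom ℝ) P) = 0 := fun z =>
      (eval_map_eq_of_totalDegree_eq_zero hP z ζ).trans hζ0
    simp only [hV, Set.ofPred_true, Set.mem_univ, true_and,
      (dense_setOf_forall_exists_rat_cast_eq _).closure_eq]
  have : Nonempty (Fin k) := Fin.pos_iff_nonempty.mp (Nat.pos_of_mul_pos_right hkr)
  obtain ⟨L, hL, hLip⟩ := ((AnalyticOnNhd.eval_mvPolynomial (map (Int.castRingHom ℝ) P) ζ
    trivial).differentiableAt.hasFDerivAt.isBigO_sub).exists_pos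
  obtain ⟨δ, hδ, hball⟩ := Metric.eventually_nhds_iff.mp hLip.bound
  rw [Metric.mem_closure_iff]
  intro ε hε
  have hψ' := tendsto_mul_pow_of_isLittleO_rpow hkr hψ
  have hsmall : ∀ᶠ X in atTop, ψ X < min ε δ ∧ L * (ψ X * X ^ (k * r - 1)) < 1 :=
    ((tendsto_of_tendsto_mul_pow hψ').eventually (gt_mem_nhds (lt_min hε hδ))).and
      ((hψ'.const_mul L).eventually (gt_mem_nhds (by simp)))
  obtain ⟨X, ⟨hψε, hψL⟩, x, y, hx, hxX, hxy⟩ :=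
    (hsmall.and_frequently (frequently_atTop.mpr happrox)).exists
  have hdist : dist (fun j => (y j : ℝ) / x j) ζ ≤ ψ X := by
    simpa using dist_div_le_div_of_abs_mul_sub_le hxy one_pos fun j => by
      exact_mod_cast Int.one_le_abs (hx j)
  have hPL := hball (hdist.trans_lt (hψε.trans_le (min_le_right _ _)))
  rw [hζ0, sub_zero, ← dist_eq_norm, Real.norm_eq_abs] at hPL
  refine ⟨_, ⟨eval_div_eq_zero_of_abs_eval_le hdeg.le (Nat.pos_of_mul_pos_left hkr) hL.le hx
    hxX hxy hPL (by simpa using hψL), fun j => ⟨y j / x j, by push_cast; rfl⟩⟩, ?_⟩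
  rw [dist_comm]
  exact hdist.trans_lt (hψε.trans_le (min_le_left _ _))
end

section
/- Let ζ be irrational with convergents r_n/s_n satisfying −log|s_n ζ − r_n| / log s_n → k·λ + k − 1 as n → ∞, for some real λ > 1 and integer k ≥ 1. Then for each 1 ≤ j ≤ k, |s_n^j ζ^j − r_n^j| = s_n^{−(kλ+k−j)+o(1)}, i.e., −log|s_n^j ζ^j − r_n^j| / log(s_n^j) → (kλ + k − j)/j as n → ∞; in particular, for sufficiently large n, r_n^j / s_n^j is a convergent of ζ^j. -/
/-!
Write `r/s` for the convergent and `T = (ζ^j - (r/s)^j) / (ζ - r/s)`, the slope of `x ↦ x^j`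
between `r/s` and `ζ`. Then `s^j ζ^j - r^j = s^(j-1) (s ζ - r) T`, and `T → j ζ^(j-1) ≠ 0`, so
`log |s^j ζ^j - r^j| = log |s ζ - r| + (j - 1) log s + O(1)`, which gives the exponent
`(kλ + k - j)/j`. That exponent exceeds `1`, so eventually `|s^j ζ^j - r^j| < 1/(2 s^j)`, and
Legendre's theorem, which only needs `r` and `s` to be integers (not coprime), makes `r^j/s^j` a
convergent of `ζ^j`.
-/

open Filter Topology

namespace GenContFract

variable {K : Type*} [Field K] [LinearOrder K] [FloorRing K]

theorem exists_int_contsAux_eq (v : K) (n : ℕ) :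
    ∃ a b : ℤ, (GenContFract.of v).contsAux n = ⟨(a : K), (b : K)⟩ := by
  induction n using Nat.twoStepInduction with
  | zero => exact ⟨1, 0, by simp⟩
  | one => exact ⟨⌊v⌋, 1, by simp [of_h_eq_floor]⟩
  | more n ih ih' =>
    obtain ⟨a, b, hab⟩ := ih
    obtain ⟨a', b', hab'⟩ := ih'
    cases hsn : (GenContFract.of v).s.get? n with
    | none => exact ⟨a', b', by rw [contsAux_stable_step_of_terminated hsn, hab']⟩
    | some gp =>
      obtain ⟨hgpa, z, hgpb⟩ := of_partNum_eq_one_and_exists_int_partDen_eq hsn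
      refine ⟨z * a' + a, z * b' + b, ?_⟩
      rw [contsAux_recurrence hsn hab hab', hgpa, hgpb]
      push_cast
      ring_nf

theorem exists_int_eq_nums_dens (v : K) (n : ℕ) :
    ∃ a b : ℤ, (GenContFract.of v).nums n = a ∧ (GenContFract.of v).dens n = b := by
  obtain ⟨a, b, h⟩ := exists_int_contsAux_eq v (n + 1)
  exact ⟨a, b, by rw [num_eq_conts_a, nth_cont_eq_succ_nth_contAux, h],
    by rw [den_eq_conts_b, nth_cont_eq_succ_nth_contAux, h]⟩

theorem one_le_dens [IsStrictOrderedRing K] (v : K) (n : ℕ) : 1 ≤ (GenContFract.of v).dens n :=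
  zeroth_den_eq_one (g := GenContFract.of v) ▸
    monotone_nat_of_le_succ (fun m => of_den_mono (n := m)) n.zero_le

variable {ξ : ℝ}

theorem not_terminatedAt_of_irrational (hξ : Irrational ξ) (n : ℕ) :
    ¬(GenContFract.of ξ).TerminatedAt n :=
  fun ht => let ⟨q, hq⟩ := (terminates_iff_rat ξ).1 ⟨n, ht⟩; hξ.ne_rat q hq

theorem tendsto_dens_atTop_of_irrational (hξ : Irrational ξ) :
    Tendsto (GenContFract.of ξ).dens atTop atTop := by
  refine tendsto_atTop_mono' atTop ?_ tendsto_natCast_atTop_atTop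
  filter_upwards [eventually_ge_atTop 5] with n hn
  calc (n : ℝ) ≤ Nat.fib n := mod_cast Nat.le_fib_self hn
    _ ≤ Nat.fib (n + 1) := mod_cast Nat.fib_le_fib_succ
    _ ≤ (GenContFract.of ξ).dens n :=
      succ_nth_fib_le_of_nth_den (.inr (not_terminatedAt_of_irrational hξ _))

theorem dens_mul_sub_nums_ne_zero_of_irrational (hξ : Irrational ξ) (n : ℕ) :
    (GenContFract.of ξ).dens n * ξ - (GenContFract.of ξ).nums n ≠ 0 := by
  obtain ⟨q, hq⟩ := exists_rat_eq_nth_conv ξ n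
  rw [conv_eq_num_div_den] at hq
  intro h
  refine hξ.ne_rat q ?_
  rw [← hq, eq_div_iff (zero_lt_one.trans_le (one_le_dens ξ n)).ne']
  linarith

end GenContFract

theorem Real.exists_convs_eq_intCast_div {ξ : ℝ} {a b : ℤ} (hb : 0 < b)
    (h : |b * ξ - a| < 1 / (2 * b)) : ∃ m, (GenContFract.of ξ).convs m = a / b := by
  set q : ℚ := a / b
  have hbR : (0 : ℝ) < b := Int.cast_pos.2 hb
  have hden : (q.den : ℝ) ≤ b := by
    have : (q.den : ℤ) ∣ b := by simpa [q, Rat.divInt_eq_div] using Rat.den_dvd a b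
    exact_mod_cast Int.le_of_dvd hb this
  have hq : (q : ℝ) = a / b := by push_cast [q]; rfl
  have hclose : |ξ - q| < 1 / (2 * (q.den : ℝ) ^ 2) :=
    calc |ξ - q| = |b * ξ - a| / b := by
          rw [hq, ← abs_of_pos hbR, ← abs_div, abs_of_pos hbR]; congr 1; field_simp
      _ < 1 / (2 * b) / b := by gcongr
      _ = 1 / (2 * (b : ℝ) ^ 2) := by ring
      _ ≤ 1 / (2 * (q.den : ℝ) ^ 2) := by gcongr
  obtain ⟨m, hm⟩ := Real.exists_convs_eq_rat hclose
  exact ⟨m, hm.trans hq⟩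

theorem GenContFract.exists_convs_eq_nums_pow_div_dens_pow {v ξ : ℝ} {n j : ℕ}
    (h : |(GenContFract.of v).dens n ^ j * ξ - (GenContFract.of v).nums n ^ j| <
      1 / (2 * (GenContFract.of v).dens n ^ j)) :
    ∃ m, (GenContFract.of ξ).convs m =
      (GenContFract.of v).nums n ^ j / (GenContFract.of v).dens n ^ j := by
  obtain ⟨a, b, ha, hb⟩ := exists_int_eq_nums_dens v n
  have hb0 : 0 < b := by exact_mod_cast hb ▸ zero_lt_one.trans_le (one_le_dens v n)
  rw [ha, hb] at h ⊢
  exact_mod_cast Real.exists_convs_eq_intCast_div (pow_pos hb0 j) (by push_cast; exact h)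

theorem Filter.Tendsto.eventually_abs_lt_one_div_two_mul {ι : Type*} {l : Filter ι}
    {q x : ι → ℝ} {e : ℝ} (hx : Tendsto (fun n => -Real.log |x n| / Real.log (q n)) l (𝓝 e))
    (hq : Tendsto q l atTop) (he : 1 < e) : ∀ᶠ n in l, |x n| < 1 / (2 * q n) := by
  obtain ⟨θ, h1θ, hθe⟩ := exists_between he
  have hlog := Real.tendsto_log_atTop.comp hq
  filter_upwards [hq.eventually_gt_atTop 1, hx.eventually (eventually_gt_nhds hθe),
    (hlog.const_mul_atTop (sub_pos.2 h1θ)).eventually_gt_atTop (Real.log 2)]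
    with n hq1 hθ h2
  have hlogq : 0 < Real.log (q n) := Real.log_pos hq1
  rw [lt_div_iff₀ hlogq] at hθ
  rcases (abs_nonneg (x n)).eq_or_lt with h0 | hpos
  · rw [← h0]; positivity
  · rw [← Real.log_lt_log_iff hpos (by positivity), one_div, Real.log_inv,
      Real.log_mul two_ne_zero (by positivity)]
    simp only [Function.comp_apply] at h2
    linarith

theorem pow_mul_pow_sub_pow_eq_mul_slope {s r ζ : ℝ} (hs : s ≠ 0) (j : ℕ) :
    s ^ (j + 1) * ζ ^ (j + 1) - r ^ (j + 1) =
      s ^ j * (s * ζ - r) * slope (· ^ (j + 1)) ζ (r / s) := by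
  have hr : r = s * (r / s) := by field_simp
  rw [slope_def_field]
  generalize r / s = y at *
  subst hr
  rcases eq_or_ne y ζ with rfl | hy
  · simp [mul_pow]
  · have : y - ζ ≠ 0 := sub_ne_zero.2 hy
    field_simp
    ring

theorem tendsto_neg_log_abs_pow_sub_pow_div_log_pow {ι : Type*} {l : Filter ι} {ζ c : ℝ}
    {r s : ι → ℝ} (hζ : ζ ≠ 0) (hs : Tendsto s l atTop)
    (hrs : Tendsto (fun n => r n / s n) l (𝓝 ζ)) (hne : ∀ᶠ n in l, s n * ζ - r n ≠ 0)
    (hc : Tendsto (fun n => -Real.log |s n * ζ - r n| / Real.log (s n)) l (𝓝 c))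
    {j : ℕ} (hj : j ≠ 0) :
    Tendsto (fun n => -Real.log |s n ^ j * ζ ^ j - r n ^ j| / Real.log (s n ^ j)) l
      (𝓝 ((c + 1 - j) / j)) := by
  obtain ⟨i, rfl⟩ := Nat.exists_eq_succ_of_ne_zero hj
  set T := fun n => slope (· ^ (i + 1)) ζ (r n / s n)
  have hrs_ne : ∀ᶠ n in l, r n / s n ∈ ({ζ}ᶜ : Set ℝ) := by
    filter_upwards [hne, hs.eventually_gt_atTop 0] with n hn hsn h
    exact hn (by rw [← Set.mem_singleton_iff.1 h]; field_simp; ring)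
  have hT : Tendsto T l (𝓝 ((i + 1) * ζ ^ i)) := by
    have := (hasDerivAt_pow (i + 1) ζ).tendsto_slope.comp
      (tendsto_nhdsWithin_of_tendsto_nhds_of_eventually_within _ hrs hrs_ne)
    simpa [T, Function.comp_def] using this
  have hL : ((i : ℝ) + 1) * ζ ^ i ≠ 0 := by positivity
  have hlogs : Tendsto (fun n => Real.log (s n)) l atTop := Real.tendsto_log_atTop.comp hs
  have hlog_eq : (fun n => (-Real.log |s n * ζ - r n| / Real.log (s n) - i
      - Real.log |T n| / Real.log (s n)) / (i + 1)) =ᶠ[l]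
      fun n => -Real.log |s n ^ (i + 1) * ζ ^ (i + 1) - r n ^ (i + 1)| /
        Real.log (s n ^ (i + 1)) := by
    filter_upwards [hs.eventually_gt_atTop 1, hne, hT.eventually_ne hL] with n hs1 hn hTn
    have hlog : 0 < Real.log (s n) := Real.log_pos hs1
    rw [pow_mul_pow_sub_pow_eq_mul_slope (by positivity) i, abs_mul, abs_mul,
      Real.log_mul (by positivity) (abs_ne_zero.2 hTn),
      Real.log_mul (by positivity) (abs_ne_zero.2 hn), abs_pow, Real.log_pow, Real.log_pow]
    simp only [Real.log_abs]
    field_simp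
    push_cast
    ring
  have hlim := ((hc.sub_const (i : ℝ)).sub
    ((hT.abs.log (abs_ne_zero.2 hL)).div_atTop hlogs)).div_const ((i : ℝ) + 1)
  convert hlim.congr' hlog_eq using 2
  push_cast
  ring

theorem powers_of_convergents_general (ζ : ℝ) (hζ : Irrational ζ) (k : ℕ)
    (lam : ℝ) (hlam : 1 < lam)
    (r s : ℕ → ℝ)
    (hr : ∀ n, r n = (GenContFract.of ζ).nums n)
    (hs : ∀ n, s n = (GenContFract.of ζ).dens n)
    (hlim : Tendsto (fun n => -Real.log |s n * ζ - r n| / Real.log (s n)) atTop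
        (nhds ((k : ℝ) * lam + (k : ℝ) - 1))) :
    ∀ j : ℕ, 1 ≤ j → j ≤ k →
      Tendsto (fun n => -Real.log |(s n) ^ j * ζ ^ j - (r n) ^ j| / Real.log ((s n) ^ j))
          atTop (nhds (((k : ℝ) * lam + (k : ℝ) - (j : ℝ)) / (j : ℝ))) ∧
      ∃ N : ℕ, ∀ n, N ≤ n → ∃ m : ℕ,
        (GenContFract.of (ζ ^ j)).convs m = (r n) ^ j / (s n) ^ j := by
  intro j hj hjk
  obtain rfl : r = _ := funext hr
  obtain rfl : s = _ := funext hs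
  have hs_top := GenContFract.tendsto_dens_atTop_of_irrational hζ
  have hconv : Tendsto (fun n => (GenContFract.of ζ).nums n / (GenContFract.of ζ).dens n)
      atTop (𝓝 ζ) :=
    (GenContFract.of_convergence ζ).congr fun n => GenContFract.conv_eq_num_div_den
  have hpow := tendsto_neg_log_abs_pow_sub_pow_div_log_pow hζ.ne_zero hs_top hconv
    (.of_forall (GenContFract.dens_mul_sub_nums_ne_zero_of_irrational hζ)) hlim (by omega : j ≠ 0)
  rw [sub_add_cancel] at hpow
  have hexp : 1 < ((k : ℝ) * lam + k - j) / j := by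
    have hjk' : (j : ℝ) ≤ k := mod_cast hjk
    have hk_lam : (k : ℝ) * 1 < k * lam :=
      mul_lt_mul_of_pos_left hlam (by linarith [(Nat.one_le_cast.2 hj : (1 : ℝ) ≤ j)])
    rw [one_lt_div (by positivity)]
    linarith
  obtain ⟨N, hN⟩ := eventually_atTop.1 (hpow.eventually_abs_lt_one_div_two_mul
    ((tendsto_pow_atTop (by omega)).comp hs_top) hexp)
  exact ⟨hpow, N, fun n hn => GenContFract.exists_convs_eq_nums_pow_div_dens_pow (hN n hn)⟩

/-- Let `ζ` be irrational with convergents `r_n/s_n` satisfying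
`−log|s_n ζ − r_n| / log s_n → kλ + k − 1` for some real `λ > 1` and integer `k ≥ 1`. Then
for each `1 ≤ j ≤ k`, `−log|s_n^j ζ^j − r_n^j| / log(s_n^j) → (kλ + k − j)/j`, and for
sufficiently large `n` the fraction `r_n^j / s_n^j` is a convergent of `ζ^j`. -/
theorem powers_of_convergents (ζ : ℝ) (hζ : Irrational ζ) (k : ℕ) (hk : 1 ≤ k)
    (lam : ℝ) (hlam : 1 < lam)
    (r s : ℕ → ℝ)
    (hr : ∀ n, r n = (GenContFract.of ζ).nums n)
    (hs : ∀ n, s n = (GenContFract.of ζ).dens n)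
    (hlim : Tendsto (fun n => -Real.log |s n * ζ - r n| / Real.log (s n)) atTop
        (nhds ((k : ℝ) * lam + (k : ℝ) - 1))) :
    ∀ j : ℕ, 1 ≤ j → j ≤ k →
      Tendsto (fun n => -Real.log |(s n) ^ j * ζ ^ j - (r n) ^ j| / Real.log ((s n) ^ j))
          atTop (nhds (((k : ℝ) * lam + (k : ℝ) - (j : ℝ)) / (j : ℝ))) ∧
      ∃ N : ℕ, ∀ n, N ≤ n → ∃ m : ℕ,
        (GenContFract.of (ζ ^ j)).convs m = (r n) ^ j / (s n) ^ j :=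
  powers_of_convergents_general ζ hζ k lam hlam r s hr hs hlim
end
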